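/- arXiv:1212.0568 — 2 statements merged into one kernel-verified Lean document; each statement's English description precedes it below -/
import Mathlib

section
/- For every continuously differentiable, compactly supported function f : ℝ³ → ℂ and every point y ∈ ℝ³, one has ∫_{ℝ³} |f(x)|/|x−y| dx ≤ ∫_{ℝ³} |∇f(x)| dx. Consequently the Kato norm satisfies ‖f‖_K ≤ ‖∇f‖_{L¹(ℝ³)}, and every function in the homogeneous Sobolev space Ẇ^{1,1}(ℝ³) (the completion of compactly supported test functions under ‖∇f‖_{L¹}) belongs to the Kato-norm closure K₀ of the bounded compactly supported functions. -/
set_option autoImplicit false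

open MeasureTheory ENNReal Filter

noncomputable section

/-- `ℝ³` as a Euclidean space. -/
abbrev R3 : Type := EuclideanSpace ℝ (Fin 3)

/-- The (global) Kato norm of a function `V` on `ℝ³`:
`‖V‖_K = sup_y ∫ |V(x)| / |x - y| dx`. -/
def katoNorm {E : Type*} [NormedAddCommGroup E] (V : R3 → E) : ℝ≥0∞ :=
  ⨆ y : R3, ∫⁻ x : R3, (‖V x‖₊ : ℝ≥0∞) / (‖x - y‖₊ : ℝ≥0∞)

/-- Membership in `K₀`, the Kato-norm closure of the bounded compactly supported
measurable functions on `ℝ³`. -/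
def memK0 (V : R3 → ℂ) : Prop :=
  ∀ ε : ℝ≥0∞, 0 < ε →
    ∃ W : R3 → ℂ, Measurable W ∧ (∃ C : ℝ, ∀ x, ‖W x‖ ≤ C) ∧ HasCompactSupport W ∧
      katoNorm (fun x => V x - W x) < ε


/-! Write `x = y + z`. Since `f` vanishes far out on the ray `t ↦ y + t • z`, the fundamental
theorem of calculus on `[1, ∞)` gives `‖f (y + z)‖ / ‖z‖ ≤ ∫_{t > 1} ‖Df (y + t • z)‖ dt`.
Integrating over `z`, exchanging the integrals and rescaling `z ↦ z / t` turns the right-hand side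
into `(∫_{t > 1} t⁻ᵈ dt) ‖Df‖₁ = ‖Df‖₁ / (d - 1)` in dimension `d`, which is at most `‖Df‖₁` as soon
as `d ≥ 2`. Compactly supported `C¹` functions are bounded, so a Kato-norm limit of them lies in
`K₀`. -/

open Set Module

theorem lintegral_Ioi_one_ofReal_inv_pow {n : ℕ} (hn : 1 < n) :
    ∫⁻ t in Ioi (1 : ℝ), ENNReal.ofReal (t ^ n)⁻¹ = ENNReal.ofReal ((n - 1 : ℝ)⁻¹) := by
  have hlt : -(n : ℝ) < -1 := by
    have : (1 : ℝ) < n := by exact_mod_cast hn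
    linarith
  rw [setLIntegral_congr_fun measurableSet_Ioi fun t (ht : 1 < t) => by
      rw [← Real.rpow_natCast, ← Real.rpow_neg (by positivity)],
    ← ofReal_integral_eq_lintegral_ofReal (integrableOn_Ioi_rpow_of_lt hlt one_pos)
      ((ae_restrict_iff' measurableSet_Ioi).2 (ae_of_all _ fun t (ht : 1 < t) => by positivity)),
    integral_Ioi_rpow_of_lt hlt one_pos, Real.one_rpow, neg_div, ← div_neg, one_div]
  congr 1
  ring

section

variable {E : Type*} [NormedAddCommGroup E] [NormedSpace ℝ E] [MeasurableSpace E] [BorelSpace E]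
  [FiniteDimensional ℝ E] (μ : Measure E) [μ.IsAddHaarMeasure]

theorem lintegral_comp_smul_of_ne_zero {h : E → ℝ≥0∞} (hh : Measurable h) {t : ℝ} (ht : t ≠ 0) :
    ∫⁻ z, h (t • z) ∂μ = ENNReal.ofReal |(t ^ finrank ℝ E)⁻¹| * ∫⁻ z, h z ∂μ := by
  rw [← lintegral_map hh (measurable_const_smul t), Measure.map_addHaar_smul μ ht,
    lintegral_smul_measure, smul_eq_mul]

theorem lintegral_lintegral_Ioi_one_comp_add_smul {h : E → ℝ≥0∞} (hh : Measurable h) (y : E) :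
    ∫⁻ z, (∫⁻ t in Ioi (1 : ℝ), h (y + t • z)) ∂μ =
      (∫⁻ t in Ioi (1 : ℝ), ENNReal.ofReal (t ^ finrank ℝ E)⁻¹) * ∫⁻ x, h x ∂μ := by
  have hmeas : Measurable fun p : E × ℝ => h (y + p.2 • p.1) := hh.comp (by fun_prop)
  rw [lintegral_lintegral_swap hmeas.aemeasurable,
    ← lintegral_mul_const _ (by fun_prop)]
  refine setLIntegral_congr_fun measurableSet_Ioi fun t (ht : 1 < t) => ?_
  rw [lintegral_comp_smul_of_ne_zero μ (h := fun w => h (y + w)) (hh.comp (measurable_const_add y))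
      (by positivity),
    lintegral_add_left_eq_self h y, abs_of_pos (by positivity)]

end

section

variable {E F : Type*} [NormedAddCommGroup E] [NormedSpace ℝ E] [NormedAddCommGroup F]
  [NormedSpace ℝ F] [CompleteSpace F]

theorem HasCompactSupport.enorm_le_lintegral_Ioi_enorm_deriv {g : ℝ → F} (hg : ContDiff ℝ 1 g)
    (hs : HasCompactSupport g) (a : ℝ) : ‖g a‖ₑ ≤ ∫⁻ t in Ioi a, ‖deriv g t‖ₑ :=
  calc ‖g a‖ₑ = ‖∫ t in Ioi a, deriv g t‖ₑ := by rw [hs.integral_Ioi_deriv_eq hg, enorm_neg]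
    _ ≤ ∫⁻ t in Ioi a, ‖deriv g t‖ₑ := enorm_integral_le_lintegral_enorm _

theorem HasCompactSupport.enorm_le_lintegral_Ioi_enorm_fderiv_mul {f : E → F}
    (hf : ContDiff ℝ 1 f) (hs : HasCompactSupport f) (y : E) {z : E} (hz : z ≠ 0) :
    ‖f (y + z)‖ₑ ≤ (∫⁻ t in Ioi (1 : ℝ), ‖fderiv ℝ f (y + t • z)‖ₑ) * ‖z‖ₑ := by
  have hray : Topology.IsClosedEmbedding fun t : ℝ => y + t • z :=
    (Homeomorph.addLeft y).isClosedEmbedding.comp (isClosedEmbedding_smul_left hz)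
  have hderiv (t : ℝ) : deriv (fun t : ℝ => f (y + t • z)) t = fderiv ℝ f (y + t • z) z := by
    have hline : HasDerivAt (fun t : ℝ => y + t • z) z t := by
      simpa using ((hasDerivAt_id t).smul_const z).const_add y
    exact ((hf.differentiable one_ne_zero _).hasFDerivAt.comp_hasDerivAt t hline).deriv
  have hFTC := (hs.comp_isClosedEmbedding hray).enorm_le_lintegral_Ioi_enorm_deriv
    (hf.comp (by fun_prop)) 1
  simp only [Function.comp_def, hderiv, one_smul] at hFTC
  calc ‖f (y + z)‖ₑ ≤ ∫⁻ t in Ioi (1 : ℝ), ‖fderiv ℝ f (y + t • z) z‖ₑ := hFTC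
    _ ≤ ∫⁻ t in Ioi (1 : ℝ), ‖fderiv ℝ f (y + t • z)‖ₑ * ‖z‖ₑ :=
        lintegral_mono fun t => (fderiv ℝ f _).le_opENorm z
    _ = (∫⁻ t in Ioi (1 : ℝ), ‖fderiv ℝ f (y + t • z)‖ₑ) * ‖z‖ₑ :=
        lintegral_mul_const' _ _ enorm_ne_top

end

section

variable {E F : Type*} [NormedAddCommGroup E] [NormedSpace ℝ E] [MeasurableSpace E]
  [BorelSpace E] [NormedAddCommGroup F] [NormedSpace ℝ F] {f : E → F}

theorem HasCompactSupport.lintegral_enorm_fderiv_eq (μ : Measure E) [IsFiniteMeasureOnCompacts μ]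
    (hf : ContDiff ℝ 1 f) (hs : HasCompactSupport f) :
    ∫⁻ x, ‖fderiv ℝ f x‖ₑ ∂μ = ENNReal.ofReal (∫ x, ‖fderiv ℝ f x‖ ∂μ) :=
  (ofReal_integral_norm_eq_lintegral_enorm
    ((hf.continuous_fderiv one_ne_zero).integrable_of_hasCompactSupport (hs.fderiv ℝ))).symm

variable [CompleteSpace F] [FiniteDimensional ℝ E] (μ : Measure E) [μ.IsAddHaarMeasure]

theorem HasCompactSupport.lintegral_enorm_div_enorm_sub_le (hf : ContDiff ℝ 1 f)
    (hs : HasCompactSupport f) (hd : 1 < finrank ℝ E) (y : E) :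
    ∫⁻ x, ‖f x‖ₑ / ‖x - y‖ₑ ∂μ ≤
      ENNReal.ofReal ((finrank ℝ E - 1 : ℝ)⁻¹) * ∫⁻ x, ‖fderiv ℝ f x‖ₑ ∂μ := by
  have : Nontrivial E := nontrivial_of_finrank_pos (R := ℝ) (by omega)
  have hne : ∀ᵐ z ∂μ, z ≠ 0 := compl_mem_ae_iff.2 (measure_singleton 0)
  calc ∫⁻ x, ‖f x‖ₑ / ‖x - y‖ₑ ∂μ = ∫⁻ z, ‖f (y + z)‖ₑ / ‖z‖ₑ ∂μ := by
        rw [← lintegral_add_left_eq_self _ y]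
        simp
    _ ≤ ∫⁻ z, (∫⁻ t in Ioi (1 : ℝ), ‖fderiv ℝ f (y + t • z)‖ₑ) ∂μ :=
        lintegral_mono_ae <| hne.mono fun z hz =>
          ENNReal.div_le_of_le_mul (hs.enorm_le_lintegral_Ioi_enorm_fderiv_mul hf y hz)
    _ = ENNReal.ofReal ((finrank ℝ E - 1 : ℝ)⁻¹) * ∫⁻ x, ‖fderiv ℝ f x‖ₑ ∂μ := by
        rw [lintegral_lintegral_Ioi_one_comp_add_smul μ
            (hf.continuous_fderiv one_ne_zero).enorm.measurable y,
          lintegral_Ioi_one_ofReal_inv_pow hd]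

theorem HasCompactSupport.lintegral_enorm_div_enorm_sub_le_lintegral_enorm_fderiv
    (hf : ContDiff ℝ 1 f) (hs : HasCompactSupport f) (hd : 1 < finrank ℝ E) (y : E) :
    ∫⁻ x, ‖f x‖ₑ / ‖x - y‖ₑ ∂μ ≤ ∫⁻ x, ‖fderiv ℝ f x‖ₑ ∂μ := by
  refine (hs.lintegral_enorm_div_enorm_sub_le μ hf hd y).trans (mul_le_of_le_one_left' ?_)
  have : (2 : ℝ) ≤ finrank ℝ E := by exact_mod_cast hd
  exact ENNReal.ofReal_le_one.2 (inv_le_one_of_one_le₀ (by linarith))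

theorem HasCompactSupport.integral_norm_div_norm_sub_le (hf : ContDiff ℝ 1 f)
    (hs : HasCompactSupport f) (hd : 1 < finrank ℝ E) (y : E) :
    ∫ x, ‖f x‖ / ‖x - y‖ ∂μ ≤ ∫ x, ‖fderiv ℝ f x‖ ∂μ := by
  have hmeas : Measurable fun x => ‖f x‖ / ‖x - y‖ :=
    hf.continuous.norm.measurable.div (by fun_prop)
  rw [integral_eq_lintegral_of_nonneg_ae (ae_of_all _ fun x => by positivity)
      hmeas.aestronglyMeasurable,
    ← toReal_ofReal (integral_nonneg fun x => norm_nonneg _),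
    ← hs.lintegral_enorm_fderiv_eq μ hf]
  refine ENNReal.toReal_mono ?_ ((lintegral_mono fun x => ?_).trans
    (hs.lintegral_enorm_div_enorm_sub_le_lintegral_enorm_fderiv μ hf hd y))
  · rw [hs.lintegral_enorm_fderiv_eq μ hf]
    exact ofReal_ne_top
  · rw [← ofReal_norm, ← ofReal_norm]
    exact ENNReal.ofReal_div_le (norm_nonneg _)

end

theorem katoNorm_sub_self (V : R3 → ℂ) : katoNorm (fun x => V x - V x) = 0 := by
  simp [katoNorm]

theorem memK0_of_tendsto_katoNorm {g : R3 → ℂ} {gs : ℕ → R3 → ℂ} (hc : ∀ n, Continuous (gs n))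
    (hs : ∀ n, HasCompactSupport (gs n))
    (h : Tendsto (fun n => katoNorm fun x => g x - gs n x) atTop (nhds 0)) : memK0 g :=
  fun _ hε =>
    let ⟨n, hn⟩ := (h.eventually (gt_mem_nhds hε)).exists
    ⟨gs n, (hc n).measurable, (hc n).bounded_above_of_compact_support (hs n), hs n, hn⟩

theorem kato_le_W11 (f : R3 → ℂ) (hf : ContDiff ℝ 1 f) (hsupp : HasCompactSupport f) :
    (∀ y : R3, ∫ x : R3, ‖f x‖ / ‖x - y‖ ≤ ∫ x : R3, ‖fderiv ℝ f x‖) ∧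
    katoNorm f ≤ ENNReal.ofReal (∫ x : R3, ‖fderiv ℝ f x‖) ∧
    memK0 f ∧
    -- every function in `Ẇ^{1,1}` (a Kato-norm limit of compactly supported test
    -- functions, as provided by the previous two clauses) belongs to `K₀`:
    (∀ (g : R3 → ℂ) (gs : ℕ → R3 → ℂ),
      (∀ n, ContDiff ℝ 1 (gs n)) → (∀ n, HasCompactSupport (gs n)) →
      Tendsto (fun n => katoNorm (fun x => g x - gs n x)) atTop (nhds 0) →
      memK0 g) := by
  have hd : 1 < finrank ℝ R3 := by simp
  refine ⟨hsupp.integral_norm_div_norm_sub_le volume hf hd, ?_, ?_,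
    fun g gs hc hs => memK0_of_tendsto_katoNorm (fun n => (hc n).continuous) hs⟩
  · rw [← hsupp.lintegral_enorm_fderiv_eq volume hf]
    exact iSup_le (hsupp.lintegral_enorm_div_enorm_sub_le_lintegral_enorm_fderiv volume hf hd)
  · refine memK0_of_tendsto_katoNorm (gs := fun _ => f) (fun _ => hf.continuous) (fun _ => hsupp) ?_
    simpa only [katoNorm_sub_self] using tendsto_const_nhds
end
end

section
/- For every twice continuously differentiable, compactly supported function f : ℝ³ → ℂ and every x ∈ ℝ³, one has |f(x)| ≤ (1/4π) ∫_{ℝ³} |D²f(y)|/|x−y| dy, where |D²f(y)| denotes the operator norm of the Hessian matrix of f at y. In particular ‖f‖_{L^∞(ℝ³)} ≤ (1/4π) ‖ |D²f| ‖_K. -/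
/-!
Fix `x` and a unit vector `ω`. Since `f` and `Df` vanish far out on the ray `r ↦ x + r ω`,
integrating `d/dr (f(x + rω) - r ∂_ω f(x + rω)) = -r ∂²_ω f(x + rω)` along it gives
`f(x) = ∫₀^∞ r ∂²_ω f(x + rω) dr`, so `|f(x)| ≤ ∫₀^∞ r |D²f(x + rω)| dr`. Averaging over the
unit sphere, whose area is `4π`, and passing to polar coordinates around `x`, in which
`dy / |x - y| = r dr dω`, yields `4π |f(x)| ≤ ∫ |D²f(y)| / |x - y| dy`.
-/

set_option autoImplicit false

open MeasureTheory ENNReal Real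

noncomputable section

open Set Metric

theorem HasCompactSupport.exists_pos_forall_apply_add_smul_eq_zero {E F : Type*}
    [NormedAddCommGroup E] [NormedSpace ℝ E] [Zero F] {f : E → F} (hf : HasCompactSupport f)
    (x : E) : ∃ R > (0 : ℝ), ∀ ω : E, ‖ω‖ = 1 → ∀ r : ℝ, R ≤ r → f (x + r • ω) = 0 := by
  obtain ⟨R, hR, hf0⟩ := hf.exists_pos_le_norm
  refine ⟨R + ‖x‖, by positivity, fun ω hω r hr => hf0 _ ?_⟩
  calc R ≤ ‖r • ω‖ - ‖x‖ := by
        rw [norm_smul, hω, mul_one, Real.norm_eq_abs]; linarith [le_abs_self r]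
    _ ≤ ‖x + r • ω‖ := by
        have := norm_sub_le (x + r • ω) x
        rw [add_sub_cancel_left] at this
        linarith

/-- Taylor's formula at `R` with integral remainder, for a function that is flat at `R`. -/
theorem eq_intervalIntegral_smul_of_hasDerivAt {F : Type*} [NormedAddCommGroup F]
    [NormedSpace ℝ F] [CompleteSpace F] {g g' g'' : ℝ → F} {R : ℝ}
    (hg : ∀ t, HasDerivAt g (g' t) t) (hg' : ∀ t, HasDerivAt g' (g'' t) t)
    (hg'' : Continuous g'') (hR : g R = 0) (hR' : g' R = 0) :
    g 0 = ∫ t in (0 : ℝ)..R, t • g'' t := by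
  have hderiv : ∀ t, HasDerivAt (fun t => g t - t • g' t) (-(t • g'' t)) t := fun t =>
    ((hg t).sub ((hasDerivAt_id' t).smul (hg' t))).congr_deriv (by simp)
  have hFTC := intervalIntegral.integral_eq_sub_of_hasDerivAt (fun t _ => hderiv t)
    ((continuous_id.smul hg'').neg.intervalIntegrable 0 R)
  rw [intervalIntegral.integral_neg, hR, hR'] at hFTC
  simpa using hFTC.symm

section SecondDerivative

variable {E F : Type*} [NormedAddCommGroup E] [NormedSpace ℝ E] [NormedAddCommGroup F]
  [NormedSpace ℝ F] {f : E → F}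

theorem ContDiff.continuous_fderiv_fderiv (hf : ContDiff ℝ 2 f) :
    Continuous (fderiv ℝ (fderiv ℝ f)) :=
  (hf.fderiv_right (by norm_num)).continuous_fderiv one_ne_zero

/-- The space of bilinear maps is given explicitly: left to unification, its norm instance is
not found in reasonable time. -/
theorem ContDiff.measurable_enorm_fderiv_fderiv [MeasurableSpace E] [OpensMeasurableSpace E]
    (hf : ContDiff ℝ 2 f) : Measurable fun y => ‖fderiv ℝ (fderiv ℝ f) y‖ₑ := by
  simpa only [ofReal_norm] using
    (Continuous.norm (E := E →L[ℝ] E →L[ℝ] F) hf.continuous_fderiv_fderiv).measurable.ennreal_ofReal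

theorem enorm_le_lintegral_ray_of_contDiff_two [CompleteSpace F] (hf : ContDiff ℝ 2 f)
    (hsupp : HasCompactSupport f) (x : E) {ω : E} (hω : ‖ω‖ = 1) :
    ‖f x‖ₑ ≤ ∫⁻ r in Ioi (0 : ℝ), ENNReal.ofReal r * ‖fderiv ℝ (fderiv ℝ f) (x + r • ω)‖ₑ := by
  set D2 := fderiv ℝ (fderiv ℝ f)
  have hdf : ContDiff ℝ 1 (fderiv ℝ f) := hf.fderiv_right (by norm_num)
  have hline : ∀ r : ℝ, HasDerivAt (fun r : ℝ => x + r • ω) ω r := fun r => by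
    simpa using ((hasDerivAt_id r).smul_const ω).const_add x
  have hg : ∀ r : ℝ, HasDerivAt (fun r => f (x + r • ω)) (fderiv ℝ f (x + r • ω) ω) r :=
    fun r => ((hf.differentiable (by norm_num) _).hasFDerivAt).comp_hasDerivAt r (hline r)
  have hg' : ∀ r : ℝ, HasDerivAt (fun r => fderiv ℝ f (x + r • ω) ω) (D2 (x + r • ω) ω ω) r :=
    fun r => by
      simpa using (((hdf.differentiable one_ne_zero _).hasFDerivAt.comp_hasDerivAt r
        (hline r)).clm_apply (hasDerivAt_const r ω))
  obtain ⟨R₀, hR₀, hf0⟩ := hsupp.exists_pos_forall_apply_add_smul_eq_zero x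
  obtain ⟨R₁, -, hdf0⟩ := (hsupp.fderiv ℝ).exists_pos_forall_apply_add_smul_eq_zero x
  set R := max R₀ R₁
  have htaylor := eq_intervalIntegral_smul_of_hasDerivAt hg hg' (by fun_prop)
    (hf0 ω hω R (le_max_left _ _)) (by rw [hdf0 ω hω R (le_max_right _ _)]; rfl)
  simp only [zero_smul, add_zero] at htaylor
  rw [htaylor, intervalIntegral.integral_of_le (hR₀.le.trans (le_max_left _ _))]
  calc _ ≤ ∫⁻ r in Ioc 0 R, ‖r • D2 (x + r • ω) ω ω‖ₑ := enorm_integral_le_lintegral_enorm _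
    _ ≤ ∫⁻ r in Ioc 0 R, ENNReal.ofReal r * ‖D2 (x + r • ω)‖ₑ := by
        refine setLIntegral_mono' measurableSet_Ioc fun r hr => ?_
        rw [enorm_smul, Real.enorm_of_nonneg hr.1.le]
        gcongr
        simpa [enorm_le_iff_norm_le, hω] using (D2 (x + r • ω)).le_opNorm₂ ω ω
    _ ≤ _ := lintegral_mono_set Ioc_subset_Ioi_self

end SecondDerivative

theorem lintegral_eq_lintegral_toSphere_lintegral_Ioi {E : Type*} [NormedAddCommGroup E]
    [NormedSpace ℝ E] [Nontrivial E] [FiniteDimensional ℝ E] [MeasurableSpace E] [BorelSpace E]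
    (μ : Measure E) [μ.IsAddHaarMeasure] {g : E → ℝ≥0∞} (hg : Measurable g) :
    ∫⁻ z, g z ∂μ = ∫⁻ ω, (∫⁻ r in Ioi (0 : ℝ),
      ENNReal.ofReal (r ^ (Module.finrank ℝ E - 1)) * g (r • (ω : E))) ∂μ.toSphere := by
  have hG : Measurable fun p : sphere (0 : E) 1 × Ioi (0 : ℝ) => g ((p.2 : ℝ) • (p.1 : E)) :=
    hg.comp (by fun_prop)
  calc ∫⁻ z, g z ∂μ = ∫⁻ z : ({0}ᶜ : Set E), g z ∂μ.comap Subtype.val := by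
        rw [lintegral_subtype_comap (measurableSet_singleton _).compl, restrict_compl_singleton]
    _ = ∫⁻ p, g ((p.2 : ℝ) • (p.1 : E)) ∂μ.toSphere.prod (.volumeIoiPow _) := by
        rw [← (μ.measurePreserving_homeomorphUnitSphereProd).lintegral_comp hG]
        refine lintegral_congr fun z => ?_
        have hz : ‖(z : E)‖ ≠ 0 := norm_ne_zero_iff.mpr z.2
        simp [smul_inv_smul₀ hz]
    _ = _ := by
      rw [lintegral_prod _ hG.aemeasurable]
      refine lintegral_congr fun ω => ?_
      rw [Measure.volumeIoiPow, lintegral_withDensity_eq_lintegral_mul _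
        (by fun_prop) (by fun_prop), ← lintegral_subtype_comap measurableSet_Ioi]
      rfl

theorem volume_toSphere_univ_fin_three :
    (volume : Measure R3).toSphere univ = ENNReal.ofReal (4 * π) := by
  rw [Measure.toSphere_apply_univ, finrank_euclideanSpace_fin,
    EuclideanSpace.volume_ball_fin_three, ofReal_one, one_pow, one_mul, ← ENNReal.ofReal_natCast,
    ← ENNReal.ofReal_mul (by norm_num)]
  ring_nf

/-- `4π` times the Newton potential of `|V|` at `x`. -/
def newtonPotential {E : Type*} [NormedAddCommGroup E] (V : R3 → E) (x : R3) : ℝ≥0∞ :=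
  ∫⁻ y, ‖V y‖ₑ / ‖x - y‖ₑ

section NewtonPotential

variable {E : Type*} [NormedAddCommGroup E] {V : R3 → E}

theorem newtonPotential_le_katoNorm (V : R3 → E) (x : R3) : newtonPotential V x ≤ katoNorm V :=
  le_iSup_of_le x <| le_of_eq <| lintegral_congr fun y => by rw [enorm_sub_rev]; rfl

theorem newtonPotential_eq_lintegral_toSphere (hV : Measurable fun y => ‖V y‖ₑ) (x : R3) :
    newtonPotential V x = ∫⁻ ω, (∫⁻ r in Ioi (0 : ℝ),
      ENNReal.ofReal r * ‖V (x + r • (ω : R3))‖ₑ) ∂(volume : Measure R3).toSphere := by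
  rw [newtonPotential, ← lintegral_add_left_eq_self _ x]
  simp_rw [sub_add_cancel_left, enorm_neg]
  rw [lintegral_eq_lintegral_toSphere_lintegral_Ioi volume
    (g := fun z => ‖V (x + z)‖ₑ / ‖z‖ₑ) ((hV.comp (measurable_const_add x)).div measurable_enorm)]
  refine lintegral_congr fun ω => setLIntegral_congr_fun measurableSet_Ioi fun r (hr : 0 < r) => ?_
  have hr' : ENNReal.ofReal r ≠ 0 := by simpa using hr
  rw [finrank_euclideanSpace_fin, enorm_smul, Real.enorm_of_nonneg hr.le,
    ← ofReal_norm (ω : R3), norm_eq_of_mem_sphere, ofReal_one, mul_one, Nat.add_one_sub_one,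
    ENNReal.ofReal_pow hr.le, pow_two, mul_assoc, ENNReal.mul_div_cancel hr' ofReal_ne_top]

theorem newtonPotential_lt_top (hV : Continuous V)
    (hsupp : HasCompactSupport V) (x : R3) : newtonPotential V x < ⊤ := by
  obtain ⟨C, hC⟩ := hsupp.norm.exists_bound_of_continuous hV.norm
  obtain ⟨R, -, hV0⟩ := hsupp.exists_pos_forall_apply_add_smul_eq_zero x
  set B := ENNReal.ofReal R * ENNReal.ofReal C
  have hray : ∀ ω : sphere (0 : R3) 1,
      ∫⁻ r in Ioi (0 : ℝ), ENNReal.ofReal r * ‖V (x + r • (ω : R3))‖ₑ ≤ B * volume (Ioc 0 R) := by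
    intro ω
    calc _ ≤ ∫⁻ r in Ioi (0 : ℝ), (Ioc 0 R).indicator (fun _ => B) r := by
          refine setLIntegral_mono' measurableSet_Ioi fun r (hr : 0 < r) => ?_
          rcases le_or_gt r R with hrR | hrR
          · rw [indicator_of_mem (show r ∈ Ioc 0 R from ⟨hr, hrR⟩), ← ofReal_norm]
            exact mul_le_mul' (ofReal_le_ofReal hrR) (ofReal_le_ofReal (le_of_abs_le (hC _)))
          · rw [hV0 ω (norm_eq_of_mem_sphere ω) r hrR.le, enorm_zero, mul_zero]
            exact zero_le
      _ ≤ ∫⁻ r, (Ioc 0 R).indicator (fun _ => B) r := setLIntegral_le_lintegral _ _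
      _ = B * volume (Ioc 0 R) := lintegral_indicator_const measurableSet_Ioc B
  rw [newtonPotential_eq_lintegral_toSphere hV.enorm.measurable]
  calc _ ≤ ∫⁻ _ : sphere (0 : R3) 1, B * volume (Ioc 0 R) ∂(volume : Measure R3).toSphere :=
        lintegral_mono hray
    _ < ⊤ := by
        rw [lintegral_const]
        exact mul_lt_top (mul_lt_top (mul_lt_top ofReal_lt_top ofReal_lt_top) measure_Ioc_lt_top)
          (measure_lt_top _ _)

theorem integral_norm_div_norm_sub_eq_toReal_newtonPotential (hV : Continuous V) (x : R3) :
    ∫ y, ‖V y‖ / ‖x - y‖ = (newtonPotential V x).toReal := by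
  have hmeas : Measurable fun y => ‖V y‖ / ‖x - y‖ := by fun_prop
  rw [integral_eq_lintegral_of_nonneg_ae (.of_forall fun y => by positivity)
    hmeas.aestronglyMeasurable, newtonPotential]
  congr 1
  refine lintegral_congr_ae ?_
  filter_upwards [(countable_singleton x).ae_notMem volume] with y (hy : y ≠ x)
  rw [ENNReal.ofReal_div_of_pos (norm_pos_iff.mpr (sub_ne_zero.mpr hy.symm)), ofReal_norm,
    ofReal_norm]

end NewtonPotential

section SecondDerivativeR3

variable {F : Type*} [NormedAddCommGroup F] [NormedSpace ℝ F] {f : R3 → F}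

theorem ofReal_four_pi_mul_enorm_le_newtonPotential [CompleteSpace F] (hf : ContDiff ℝ 2 f)
    (hsupp : HasCompactSupport f) (x : R3) :
    ENNReal.ofReal (4 * π) * ‖f x‖ₑ ≤ newtonPotential (fderiv ℝ (fderiv ℝ f)) x := by
  rw [newtonPotential_eq_lintegral_toSphere hf.measurable_enorm_fderiv_fderiv,
    ← volume_toSphere_univ_fin_three, mul_comm, ← lintegral_const]
  exact lintegral_mono fun ω =>
    enorm_le_lintegral_ray_of_contDiff_two hf hsupp x (norm_eq_of_mem_sphere ω)

/- In the next two proofs the generic lemmas are applied with the space of bilinear maps and its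
instance given first: left to unification, the instances on that space are not matched in
reasonable time. -/

theorem newtonPotential_fderiv_fderiv_lt_top (hf : ContDiff ℝ 2 f) (hsupp : HasCompactSupport f)
    (x : R3) : newtonPotential (fderiv ℝ (fderiv ℝ f)) x < ⊤ := by
  have hs : HasCompactSupport (fderiv ℝ (fderiv ℝ f)) := (hsupp.fderiv ℝ).fderiv ℝ
  have h := @newtonPotential_lt_top (R3 →L[ℝ] R3 →L[ℝ] F) _ _ hf.continuous_fderiv_fderiv
  exact h hs x

theorem integral_norm_fderiv_fderiv_div_norm_sub (hf : ContDiff ℝ 2 f) (x : R3) :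
    ∫ y, ‖fderiv ℝ (fderiv ℝ f) y‖ / ‖x - y‖ = (newtonPotential (fderiv ℝ (fderiv ℝ f)) x).toReal :=
  @integral_norm_div_norm_sub_eq_toReal_newtonPotential (R3 →L[ℝ] R3 →L[ℝ] F) _ _
    hf.continuous_fderiv_fderiv x

end SecondDerivativeR3

theorem linfty_le_kato_of_D2 (f : R3 → ℂ) (hf : ContDiff ℝ 2 f)
    (hsupp : HasCompactSupport f) :
    (∀ x : R3, ‖f x‖ ≤ (1 / (4 * π)) * ∫ y : R3, ‖fderiv ℝ (fderiv ℝ f) y‖ / ‖x - y‖) ∧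
    (∀ x : R3, (‖f x‖₊ : ℝ≥0∞) ≤
      (ENNReal.ofReal (4 * π))⁻¹ * katoNorm (fun y => fderiv ℝ (fderiv ℝ f) y)) := by
  have hbound : ∀ x, ‖f x‖ₑ ≤
      (ENNReal.ofReal (4 * π))⁻¹ * newtonPotential (fderiv ℝ (fderiv ℝ f)) x := fun x => by
    rw [← ENNReal.div_eq_inv_mul, ENNReal.le_div_iff_mul_le (.inl (by simp [pi_pos]))
      (.inl ofReal_ne_top), mul_comm]
    exact ofReal_four_pi_mul_enorm_le_newtonPotential hf hsupp x
  refine ⟨fun x => ?_, fun x =>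
    (hbound x).trans (mul_le_mul_right (newtonPotential_le_katoNorm _ x) _)⟩
  have hfin := newtonPotential_fderiv_fderiv_lt_top hf hsupp x
  rw [integral_norm_fderiv_fderiv_div_norm_sub hf, one_div,
    ← toReal_ofReal (by positivity : 0 ≤ 4 * π), ← toReal_inv, ← toReal_mul, ← toReal_enorm]
  exact toReal_mono (mul_ne_top (by simp [pi_pos]) hfin.ne) (hbound x)
end
end
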